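/- Let q be a prime, M a finitely generated free ℤ_q-module, and α an endomorphism of M such that α is an automorphism on M ⊗_{ℤ_q} ℚ_q. Then M/α(M) is finite, and its cardinality equals |det(α | M ⊗_{ℤ_q} ℚ_q)|_q^{−1}, where |·|_q is the q-adic absolute value. -/

import Mathlib

/-!
By Smith normal form there are a basis `(e i)` of `M` and elements `a i` with `(a i • e i)`
a basis of `α(M)`. Then `M ⧸ α(M) ≅ ∏ ℤ_q ⧸ (a i)`, while `det α` is `∏ a i` up to a unit.
Over any PID `R` this gives `|M ⧸ f(M)| = |R ⧸ (det f)|`, and for `R = ℤ_q` one has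
`|ℤ_q ⧸ (x)| = q ^ v(x) = |x|_q⁻¹`.
-/

open Module

namespace Ideal

variable {R : Type*} [CommRing R] [IsDomain R]

theorem card_quotient_span_singleton_mul {a : R} (ha : a ≠ 0) (b : R) :
    Nat.card (R ⧸ span {a * b}) = Nat.card (R ⧸ span {a}) * Nat.card (R ⧸ span {b}) := by
  let μ : R →ₗ[R] R := LinearMap.mulLeft R a
  have hμ : Function.Injective (μ : R →+ R) := mul_right_injective₀ ha
  have hmap : ∀ c, span {a * c} = Submodule.map μ (span {c}) := fun c ↦ by
    rw [span, Submodule.map_span, Set.image_singleton]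
    rfl
  -- multiplication by `a` carries `(b) ⊆ R` onto `(a * b) ⊆ (a)`
  have hrel : (span {a * b}).toAddSubgroup.relIndex (span {a} : Ideal R).toAddSubgroup =
      Nat.card (R ⧸ span {b}) := by
    rw [hmap, show span {a} = Submodule.map μ (span {1}) by rw [← hmap, mul_one],
      Submodule.map_toAddSubgroup, Submodule.map_toAddSubgroup,
      AddSubgroup.relIndex_map_map_of_injective _ _ hμ, span_singleton_one,
      Submodule.top_toAddSubgroup, AddSubgroup.relIndex_top_right]
    rfl
  have hle : span {a * b} ≤ span {a} := span_singleton_le_span_singleton.mpr (dvd_mul_right a b)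
  have hindex := AddSubgroup.relIndex_mul_index (Submodule.toAddSubgroup_mono hle)
  rw [hrel] at hindex
  exact hindex.symm.trans (Nat.mul_comm _ _)

theorem card_quotient_span_singleton_prod {ι : Type*} (s : Finset ι) {a : ι → R}
    (ha : ∀ i ∈ s, a i ≠ 0) :
    Nat.card (R ⧸ span {∏ i ∈ s, a i}) = ∏ i ∈ s, Nat.card (R ⧸ span {a i}) := by
  classical
  induction s using Finset.induction_on with
  | empty => simp
  | insert i s hi ih =>
    rw [Finset.prod_insert hi, Finset.prod_insert hi,
      card_quotient_span_singleton_mul (ha i (Finset.mem_insert_self i s)),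
      ih fun j hj ↦ ha j (Finset.mem_insert_of_mem hj)]

end Ideal

namespace LinearMap

variable {R M : Type*} [CommRing R] [AddCommGroup M] [Module R M]

theorem det_eq_prod_of_apply_basis_eq_smul {ι : Type*} [Fintype ι] (b : Basis ι R M)
    {f : M →ₗ[R] M} {c : ι → R} (hf : ∀ i, f (b i) = c i • b i) :
    LinearMap.det f = ∏ i, c i := by
  classical
  rw [← det_toMatrix b, ← Matrix.det_diagonal]
  congr 1
  ext i j
  rw [toMatrix_apply, hf, map_smul, b.repr_self, Finsupp.smul_single, smul_eq_mul, mul_one,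
    Matrix.diagonal_apply, Finsupp.single_apply]
  grind

theorem injective_of_det_ne_zero [IsDomain R] [Free R M] [Module.Finite R M] {f : M →ₗ[R] M}
    (hf : LinearMap.det f ≠ 0) : Function.Injective f := by
  let b := Free.chooseBasis R M
  have hA := Matrix.mulVec_injective_of_det_ne_zero (M := toMatrix b b f) (by rwa [det_toMatrix])
  intro x y hxy
  apply b.repr.injective
  apply DFunLike.coe_injective
  apply hA
  rw [toMatrix_mulVec_repr, toMatrix_mulVec_repr, hxy]

end LinearMap

section PID

variable {R M : Type*} [CommRing R] [IsDomain R] [IsPrincipalIdealRing R]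
  [AddCommGroup M] [Module R M]

theorem Submodule.card_quotient_eq_prod_smithNormalFormCoeffs {ι : Type*} [Fintype ι]
    (b : Basis ι R M) {N : Submodule R M} (h : finrank R N = finrank R M) :
    Nat.card (M ⧸ N) = ∏ i, Nat.card (R ⧸ Ideal.span {smithNormalFormCoeffs b h i}) := by
  rw [Nat.card_congr (N.quotientEquivPiSpan b h).toEquiv, Nat.card_pi]

theorem Submodule.associated_det_subtype_comp_prod_smithNormalFormCoeffs {ι : Type*} [Fintype ι]
    (b : Basis ι R M) {N : Submodule R M} (h : finrank R N = finrank R M) (e : M ≃ₗ[R] N) :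
    Associated (LinearMap.det (N.subtype ∘ₗ e)) (∏ i, smithNormalFormCoeffs b h i) := by
  let e' := (smithNormalFormTopBasis b h).equiv (smithNormalFormBotBasis b h) (Equiv.refl ι)
  refine (LinearMap.associated_det_comp_equiv N.subtype e e').trans (.of_eq ?_)
  refine LinearMap.det_eq_prod_of_apply_basis_eq_smul (smithNormalFormTopBasis b h) fun i ↦ ?_
  simp [e']

theorem LinearMap.card_quotient_range_eq_card_quotient_span_det [Free R M] [Module.Finite R M]
    {f : M →ₗ[R] M} (hf : LinearMap.det f ≠ 0) :
    Nat.card (M ⧸ range f) = Nat.card (R ⧸ Ideal.span {LinearMap.det f}) := by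
  let b := Free.chooseBasis R M
  let e := LinearEquiv.ofInjective f (injective_of_det_ne_zero hf)
  have h : finrank R (range f) = finrank R M := e.finrank_eq.symm
  have hdet : Associated (LinearMap.det f) (∏ i, Submodule.smithNormalFormCoeffs b h i) :=
    (range f).associated_det_subtype_comp_prod_smithNormalFormCoeffs b h e
  rw [(range f).card_quotient_eq_prod_smithNormalFormCoeffs b h,
    ← Ideal.card_quotient_span_singleton_prod _
      fun i _ ↦ Submodule.smithNormalFormCoeffs_ne_zero b h i,
    Ideal.span_singleton_eq_span_singleton.mpr hdet]

end PID

namespace PadicInt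

variable {p : ℕ} [Fact p.Prime]

theorem card_quotient_span_singleton {x : ℤ_[p]} (hx : x ≠ 0) :
    Nat.card (ℤ_[p] ⧸ Ideal.span {x}) = p ^ x.valuation := by
  have hspan : Ideal.span {x} = RingHom.ker (toZModPow x.valuation : ℤ_[p] →+* _) := by
    rw [ker_toZModPow, Ideal.span_singleton_eq_span_singleton]
    exact Associated.symm ⟨unitCoeff hx, by rw [mul_comm, ← unitCoeff_spec hx]⟩
  rw [hspan, Nat.card_congr (RingHom.quotientKerEquivOfSurjective
    (ZMod.ringHom_surjective (toZModPow x.valuation))).toEquiv, Nat.card_zmod]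

theorem card_quotient_span_singleton_eq_inv_norm {x : ℤ_[p]} (hx : x ≠ 0) :
    (Nat.card (ℤ_[p] ⧸ Ideal.span {x}) : ℝ) = ‖x‖⁻¹ := by
  rw [card_quotient_span_singleton hx, norm_eq_zpow_neg_valuation hx, zpow_neg, inv_inv,
    zpow_natCast, Nat.cast_pow]

end PadicInt

/-- Let `q` be a prime, `M` a finitely generated free `ℤ_q`-module, and `α` an
endomorphism of `M` inducing an automorphism of `M ⊗_{ℤ_q} ℚ_q`. Then `M/α(M)` is
finite, of cardinality `|det(α | M ⊗ ℚ_q)|_q⁻¹` (where `‖·‖` on `ℚ_[q]` is the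
normalized `q`-adic absolute value, with `‖q‖ = q⁻¹`). -/
theorem card_quotient_eq_inv_padic_abs_det (q : ℕ) [Fact q.Prime]
    (M : Type*) [AddCommGroup M] [Module ℤ_[q] M]
    [Module.Free ℤ_[q] M] [Module.Finite ℤ_[q] M]
    (α : M →ₗ[ℤ_[q]] M)
    (hα : Function.Bijective (α.baseChange ℚ_[q])) :
    Finite (M ⧸ LinearMap.range α) ∧
      (Nat.card (M ⧸ LinearMap.range α) : ℝ) =
        ‖LinearMap.det (α.baseChange ℚ_[q])‖⁻¹ := by
  have hunit : IsUnit (LinearMap.det (α.baseChange ℚ_[q])) :=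
    (LinearEquiv.ofBijective _ hα).isUnit_det'
  rw [LinearMap.det_baseChange] at hunit
  have hdet : LinearMap.det α ≠ 0 := fun h ↦ hunit.ne_zero (by rw [h, map_zero])
  have hcard := α.card_quotient_range_eq_card_quotient_span_det hdet
  refine ⟨Nat.finite_of_card_ne_zero ?_, ?_⟩
  · rw [hcard, PadicInt.card_quotient_span_singleton hdet]
    exact pow_ne_zero _ (Fact.out : q.Prime).ne_zero
  · rw [hcard, PadicInt.card_quotient_span_singleton_eq_inv_norm hdet, LinearMap.det_baseChange,
      PadicInt.algebraMap_apply, PadicInt.norm_def]
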